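/- For μ, ν ∈ P₂(ℝ^d) and k ∈ {1,…,d−1}: S_{k+1}²(μ,ν) − S_k²(μ,ν) ≥ (W₂²(μ,ν) − S_k²(μ,ν))/(d − k). -/

import Mathlib

noncomputable section
open MeasureTheory Matrix

abbrev Ed (d : ℕ) := EuclideanSpace ℝ (Fin d)

def couplings {d : ℕ} (μ ν : Measure (Ed d)) : Set (Measure (Ed d × Ed d)) :=
  {π | IsProbabilityMeasure π ∧ π.map Prod.fst = μ ∧ π.map Prod.snd = ν}

def transportCost {d : ℕ} (π : Measure (Ed d × Ed d)) : ℝ :=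
  ∫ p, ‖p.1 - p.2‖ ^ 2 ∂π

/-- Squared 2-Wasserstein distance. -/
def W2sq {d : ℕ} (μ ν : Measure (Ed d)) : ℝ :=
  sInf (transportCost '' couplings μ ν)

/-- Second-order displacement matrix `V_π = ∫ (x−y)(x−y)ᵀ dπ`, entrywise. -/
def Vpi {d : ℕ} (π : Measure (Ed d × Ed d)) : Matrix (Fin d) (Fin d) ℝ :=
  Matrix.of fun i j => ∫ p, (p.1 i - p.2 i) * (p.1 j - p.2 j) ∂π

lemma Vpi_isHermitian {d : ℕ} (π : Measure (Ed d × Ed d)) : (Vpi π).IsHermitian := by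
  unfold Matrix.IsHermitian
  ext i j
  simp [Vpi, Matrix.conjTranspose_apply, mul_comm]

/-- Eigenvalues in decreasing order: `eigDesc V h i` is the `(i+1)`-th largest eigenvalue. -/
def eigDesc {d : ℕ} (V : Matrix (Fin d) (Fin d) ℝ) (h : V.IsHermitian) : Fin d → ℝ :=
  fun i => h.eigenvalues (Tuple.sort h.eigenvalues i.rev)

/-- Sum of the `k` largest eigenvalues. -/
def topEigSum {d : ℕ} (k : ℕ) (V : Matrix (Fin d) (Fin d) ℝ) (h : V.IsHermitian) : ℝ :=
  ∑ i ∈ Finset.univ.filter (fun i : Fin d => (i : ℕ) < k), eigDesc V h i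

/-- Squared subspace robust Wasserstein distance:
`S_k²(μ,ν) = inf_{π ∈ Π(μ,ν)} Σ_{l=1}^k λ_l(V_π)`. -/
def SRWsq {d : ℕ} (k : ℕ) (μ ν : Measure (Ed d)) : ℝ :=
  sInf ((fun π => topEigSum k (Vpi π) (Vpi_isHermitian π)) '' couplings μ ν)

/-! Fix a coupling `π` and let `λ₁ ≥ ⋯ ≥ λ_d` be the eigenvalues of `V_π`. The `d - k` eigenvalues
after the first `k` are each at most `λ_{k+1}` and sum to `tr V_π - Σ_{l ≤ k} λ_l`, and
`tr V_π` is the transport cost of `π`. Hence `Σ_{l ≤ k+1} λ_l ≥ a + (t - a) / (d - k)` with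
`a = Σ_{l ≤ k} λ_l` and `t` the cost. As `(a, t) ↦ a + (t - a) / (d - k)` is monotone when
`d - k ≥ 1`, the bound passes to the infima over couplings. Finite second moments make `V_π`
positive semidefinite with trace the cost, which also bounds the infima from below. -/

section Spectrum

variable {d : ℕ} (V : Matrix (Fin d) (Fin d) ℝ) (h : V.IsHermitian)

lemma eigDesc_antitone : Antitone (eigDesc V h) :=
  fun _ _ hij => Tuple.monotone_sort h.eigenvalues (Fin.rev_le_rev.mpr hij)

lemma sum_eigDesc : ∑ i, eigDesc V h i = V.trace := by
  rw [h.trace_eq_sum_eigenvalues]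
  exact Equiv.sum_comp (Fin.revPerm.trans (Tuple.sort h.eigenvalues)) h.eigenvalues

lemma topEigSum_succ {k : ℕ} (hk : k < d) :
    topEigSum (k + 1) V h = topEigSum k V h + eigDesc V h ⟨k, hk⟩ := by
  have hinsert : Finset.univ.filter (fun i : Fin d => (i : ℕ) < k + 1)
      = insert ⟨k, hk⟩ (Finset.univ.filter fun i : Fin d => (i : ℕ) < k) := by
    ext i
    simp only [Finset.mem_filter, Finset.mem_univ, true_and, Finset.mem_insert, Fin.ext_iff]
    omega
  rw [topEigSum, hinsert, Finset.sum_insert (by simp), add_comm]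
  rfl

lemma trace_sub_topEigSum_le {k : ℕ} (hk : k < d) :
    V.trace - topEigSum k V h ≤ ((d : ℝ) - k) * eigDesc V h ⟨k, hk⟩ := by
  have htail : V.trace - topEigSum k V h
      = ∑ i ∈ Finset.univ.filter (fun i : Fin d => ¬ (i : ℕ) < k), eigDesc V h i := by
    rw [← sum_eigDesc V h, topEigSum,
      ← Finset.sum_filter_add_sum_filter_not Finset.univ (fun i : Fin d => (i : ℕ) < k)]
    ring
  have hcard : (Finset.univ.filter fun i : Fin d => ¬ (i : ℕ) < k).card = d - k := by
    rw [Finset.filter_not, Finset.card_sdiff_of_subset (Finset.filter_subset _ _),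
      Fin.card_filter_val_lt, Finset.card_univ, Fintype.card_fin, min_eq_right hk.le]
  calc V.trace - topEigSum k V h
      ≤ ∑ _i ∈ Finset.univ.filter (fun i : Fin d => ¬ (i : ℕ) < k), eigDesc V h ⟨k, hk⟩ := by
        rw [htail]
        refine Finset.sum_le_sum fun i hi => eigDesc_antitone V h ?_
        simpa [Fin.le_iff_val_le_val] using hi
    _ = ((d : ℝ) - k) * eigDesc V h ⟨k, hk⟩ := by
        rw [Finset.sum_const, hcard, nsmul_eq_mul, Nat.cast_sub hk.le]

lemma topEigSum_add_div_le_topEigSum_succ {k : ℕ} (hk : k < d) :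
    topEigSum k V h + (V.trace - topEigSum k V h) / ((d : ℝ) - k) ≤ topEigSum (k + 1) V h := by
  have hpos : (0 : ℝ) < d - k := sub_pos.mpr (by exact_mod_cast hk)
  rw [topEigSum_succ V h hk, add_le_add_iff_left, div_le_iff₀ hpos, mul_comm]
  exact trace_sub_topEigSum_le V h hk

lemma topEigSum_nonneg (hV : V.PosSemidef) (k : ℕ) : 0 ≤ topEigSum k V h :=
  Finset.sum_nonneg fun _ _ => hV.eigenvalues_nonneg _

end Spectrum

section Displacement

variable {d : ℕ} {π : Measure (Ed d × Ed d)}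

lemma memLp_two_sub_of_mem_couplings {μ ν : Measure (Ed d)} (hπ : π ∈ couplings μ ν)
    (hμ : Integrable (fun x => ‖x‖ ^ 2) μ) (hν : Integrable (fun x => ‖x‖ ^ 2) ν) :
    MemLp (fun p : Ed d × Ed d => p.1 - p.2) 2 π := by
  obtain ⟨-, hfst, hsnd⟩ := hπ
  have hid : ∀ {ρ : Measure (Ed d)}, Integrable (fun x => ‖x‖ ^ 2) ρ → MemLp id 2 ρ :=
    fun h => (memLp_two_iff_integrable_sq_norm aestronglyMeasurable_id).mpr h
  have h1 : MemLp Prod.fst 2 π := (hid (hfst ▸ hμ)).comp_of_map measurable_fst.aemeasurable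
  have h2 : MemLp Prod.snd 2 π := (hid (hsnd ▸ hν)).comp_of_map measurable_snd.aemeasurable
  exact h1.sub h2

variable (hπ : MemLp (fun p : Ed d × Ed d => p.1 - p.2) 2 π)
include hπ

lemma integrable_Vpi_entry (i j : Fin d) :
    Integrable (fun p : Ed d × Ed d => (p.1 i - p.2 i) * (p.1 j - p.2 j)) π := by
  have hcoord : ∀ i : Fin d, MemLp (fun p : Ed d × Ed d => p.1 i - p.2 i) 2 π := fun i =>
    (EuclideanSpace.proj i : Ed d →L[ℝ] ℝ).comp_memLp' hπ
  exact (hcoord i).integrable_mul (hcoord j)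

lemma trace_Vpi : (Vpi π).trace = transportCost π := by
  rw [Matrix.trace, transportCost]
  simp only [Matrix.diag, Vpi, Matrix.of_apply]
  rw [← integral_finsetSum _ fun i _ => integrable_Vpi_entry hπ i i]
  congr 1 with p
  rw [EuclideanSpace.norm_sq_eq]
  simp [sq]

lemma Vpi_posSemidef : (Vpi π).PosSemidef := by
  refine .of_dotProduct_mulVec_nonneg (Vpi_isHermitian π) fun c => ?_
  have hquad : star c ⬝ᵥ Vpi π *ᵥ c = ∫ p, (∑ i, c i * (p.1 i - p.2 i)) ^ 2 ∂π := by
    simp only [sq, Finset.sum_mul_sum]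
    rw [integral_finsetSum _ fun i _ => integrable_finsetSum _ fun j _ =>
      (integrable_Vpi_entry hπ i j).const_mul (c i * c j) |>.congr
        (Filter.Eventually.of_forall fun p => by ring)]
    simp only [dotProduct, Matrix.mulVec, Finset.mul_sum]
    refine Finset.sum_congr rfl fun i _ => ?_
    rw [integral_finsetSum _ fun j _ => (integrable_Vpi_entry hπ i j).const_mul (c i * c j)
      |>.congr (Filter.Eventually.of_forall fun p => by ring)]
    refine Finset.sum_congr rfl fun j _ => ?_
    rw [Vpi, Matrix.of_apply, star_trivial, mul_comm _ (c j), ← mul_assoc, ← integral_const_mul]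
    congr 1 with p
    ring
  exact hquad ▸ integral_nonneg fun _ => sq_nonneg _

end Displacement

/-- For empty `s` both sides are `sInf ∅ = 0`. -/
lemma add_div_sub_csInf_le_csInf {α : Type*} {s : Set α} {f g h : α → ℝ} {c : ℝ} (hc : 1 ≤ c)
    (hf : BddBelow (f '' s)) (hg : BddBelow (g '' s))
    (hfgh : ∀ x ∈ s, f x + (g x - f x) / c ≤ h x) :
    sInf (f '' s) + (sInf (g '' s) - sInf (f '' s)) / c ≤ sInf (h '' s) := by
  rcases s.eq_empty_or_nonempty with rfl | hs
  · simp
  refine le_csInf (hs.image h) ?_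
  rintro _ ⟨x, hx, rfl⟩
  have hF : sInf (f '' s) ≤ f x := csInf_le hf (Set.mem_image_of_mem f hx)
  have hG : sInf (g '' s) ≤ g x := csInf_le hg (Set.mem_image_of_mem g hx)
  have hc0 : 0 < c := by linarith
  have hlin : ∀ a b : ℝ, a + (b - a) / c = (a * (c - 1) + b) / c := fun a b => by
    field_simp
    ring
  refine le_trans ?_ (hfgh x hx)
  rw [hlin, hlin]
  gcongr

theorem SRWsq_increment_lower_bound_general {d : ℕ} (k : ℕ) (hk : 1 ≤ k) (hkd : k ≤ d - 1)
    (μ ν : Measure (Ed d))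
    (hμ : Integrable (fun x => ‖x‖ ^ 2) μ) (hν : Integrable (fun x => ‖x‖ ^ 2) ν) :
    (W2sq μ ν - SRWsq k μ ν) / ((d : ℝ) - k) ≤ SRWsq (k+1) μ ν - SRWsq k μ ν := by
  have hk_lt : k < d := by omega
  have hc : (1 : ℝ) ≤ d - k := by
    have : (k : ℝ) + 1 ≤ d := by exact_mod_cast hk_lt
    linarith
  have hSk_bdd : BddBelow ((fun π => topEigSum k (Vpi π) (Vpi_isHermitian π)) '' couplings μ ν) :=
    ⟨0, Set.forall_mem_image.2 fun π hπ =>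
      topEigSum_nonneg _ _ (Vpi_posSemidef (memLp_two_sub_of_mem_couplings hπ hμ hν)) k⟩
  have hW_bdd : BddBelow (transportCost '' couplings μ ν) :=
    ⟨0, Set.forall_mem_image.2 fun π _ => integral_nonneg fun _ => sq_nonneg _⟩
  have hmain : SRWsq k μ ν + (W2sq μ ν - SRWsq k μ ν) / ((d : ℝ) - k) ≤ SRWsq (k + 1) μ ν :=
    add_div_sub_csInf_le_csInf hc hSk_bdd hW_bdd fun π hπ => by
      simpa only [trace_Vpi (memLp_two_sub_of_mem_couplings hπ hμ hν)] using
        topEigSum_add_div_le_topEigSum_succ (Vpi π) (Vpi_isHermitian π) hk_lt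
  linarith

/-- `S_{k+1}²(μ,ν) − S_k²(μ,ν) ≥ (W₂²(μ,ν) − S_k²(μ,ν))/(d − k)`. -/
theorem SRWsq_increment_lower_bound {d : ℕ} (k : ℕ) (hk : 1 ≤ k) (hkd : k ≤ d - 1)
    (μ ν : Measure (Ed d)) [IsProbabilityMeasure μ] [IsProbabilityMeasure ν]
    (hμ : Integrable (fun x => ‖x‖ ^ 2) μ) (hν : Integrable (fun x => ‖x‖ ^ 2) ν) :
    (W2sq μ ν - SRWsq k μ ν) / ((d : ℝ) - k) ≤ SRWsq (k+1) μ ν - SRWsq k μ ν :=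
  SRWsq_increment_lower_bound_general k hk hkd μ ν hμ hν
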